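/- arXiv:2210.09392 — 5 statements merged into one kernel-verified Lean document; each statement's English description precedes it below -/
import Mathlib

section
/- Let m ≥ 1, let 𝒞 ⊆ ℝ^m be a compact set, and let f : ℝ^m → ℝ be continuous on 𝒞. Then for every ε > 0 there exist N ∈ ℕ and vectors u_{i,j} ∈ ℝ^{m+1} for 1 ≤ i ≤ N, 1 ≤ j ≤ i, such that the function p(x) = Σ_{i=1}^N ∏_{j=1}^i ⟨x̌, u_{i,j}⟩ satisfies |f(x) − p(x)| < ε for every x ∈ 𝒞, where x̌ = (x_1, …, x_m, 1) ∈ ℝ^{m+1} and ⟨·,·⟩ is the standard Euclidean inner product on ℝ^{m+1}. -/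
/-!
Sums `∑_{i<N} ∏_{j≤i} ⟨x̌, u i j⟩` form a subalgebra of `C(ℝ^m, ℝ)`: a product can be moved to
a later slot by padding it with the form `⟨x̌, e_{m+1}⟩ = 1`, unwanted slots are killed by a zero
vector, and a product of two such sums expands into a sum of single products. The subalgebra
contains the constants and the coordinate functions, so it separates points, and Stone–Weierstrass
(after extending `f` from the compact set by Tietze) gives the approximation.
-/

open Finset Matrix

theorem Finset.prod_range_ite_lt_of_le {M : Type*} [CommMonoid M] (f : ℕ → M) {k n : ℕ}
    (hkn : k ≤ n) : ∏ j ∈ range n, (if j < k then f j else 1) = ∏ j ∈ range k, f j := by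
  refine (prod_subset (range_subset_range.mpr hkn) fun j _ hj => ?_).symm.trans ?_
  · rw [if_neg (by simpa using hj)]
  · exact prod_congr rfl fun j hj => if_pos (mem_range.mp hj)

theorem Finset.prod_range_mul_prod_range {M : Type*} [CommMonoid M] (f g : ℕ → M) (a b : ℕ) :
    (∏ j ∈ range a, f j) * ∏ j ∈ range b, g j =
      ∏ j ∈ range (a + b), if j < a then f j else g (j - a) := by
  rw [prod_range_add]
  congr 1
  · exact prod_congr rfl fun j hj => (if_pos (mem_range.mp hj)).symm
  · exact prod_congr rfl fun j _ => by simp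

theorem exists_mem_subalgebra_near_continuousOn_of_isCompact_of_separatesPoints
    {X : Type*} [TopologicalSpace X] [NormalSpace X] [T2Space X] {A : Subalgebra ℝ C(X, ℝ)}
    (hA : A.SeparatesPoints) {K : Set X} (hK : IsCompact K) {f : X → ℝ} (hf : ContinuousOn f K)
    {ε : ℝ} (hε : 0 < ε) : ∃ g ∈ A, ∀ x ∈ K, |f x - g x| < ε := by
  obtain ⟨F, hF⟩ := ContinuousMap.exists_restrict_eq hK.isClosed ⟨K.domRestrict f, hf.domRestrict⟩
  obtain ⟨g, hgA, hg⟩ :=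
    ContinuousMap.exists_mem_subalgebra_near_continuous_of_isCompact_of_separatesPoints hA F hK hε
  refine ⟨g, hgA, fun x hx => ?_⟩
  have hFx : F x = f x := DFunLike.congr_fun hF ⟨x, hx⟩
  rw [abs_sub_comm, ← hFx]
  exact hg x hx

section AffineProductSums

variable {m : ℕ}

noncomputable def affineProductSum (N : ℕ) (u : ℕ → ℕ → Fin (m + 1) → ℝ) (x : Fin m → ℝ) : ℝ :=
  ∑ i ∈ range N, ∏ j ∈ range (i + 1), (Fin.snoc x 1 : Fin (m + 1) → ℝ) ⬝ᵥ u i j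

theorem snoc_one_dotProduct_single_last (x : Fin m → ℝ) (c : ℝ) :
    (Fin.snoc x 1 : Fin (m + 1) → ℝ) ⬝ᵥ Pi.single (Fin.last m) c = c := by
  simp [dotProduct_single]

theorem snoc_one_dotProduct_single_castSucc (x : Fin m → ℝ) (s : Fin m) (c : ℝ) :
    (Fin.snoc x 1 : Fin (m + 1) → ℝ) ⬝ᵥ Pi.single s.castSucc c = x s * c := by
  simp [dotProduct_single]

variable (m) in
def affineProductSums : AddSubmonoid ((Fin m → ℝ) → ℝ) where
  carrier := {p | ∃ N u, affineProductSum N u = p}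
  zero_mem' := ⟨0, 0, by ext; simp [affineProductSum]⟩
  add_mem' := by
    rintro _ _ ⟨N₁, u₁, rfl⟩ ⟨N₂, u₂, rfl⟩
    -- the `i`-th product of the second sum moves to slot `N₁ + i`, padded with the form `1`
    refine ⟨N₁ + N₂, fun i j => if i < N₁ then u₁ i j
      else if j < i - N₁ + 1 then u₂ (i - N₁) j else Pi.single (Fin.last m) 1, ?_⟩
    ext x
    simp only [affineProductSum, Pi.add_apply, sum_range_add]
    congr 1
    · exact sum_congr rfl fun i hi => by simp [mem_range.mp hi]
    · refine sum_congr rfl fun i _ => ?_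
      simp only [show ¬ N₁ + i < N₁ by omega, if_false, Nat.add_sub_cancel_left, apply_ite,
        snoc_one_dotProduct_single_last]
      exact prod_range_ite_lt_of_le _ (by omega)

theorem prod_mem_affineProductSums (k : ℕ) (v : ℕ → Fin (m + 1) → ℝ) :
    (fun x => ∏ j ∈ range (k + 1), (Fin.snoc x 1 : Fin (m + 1) → ℝ) ⬝ᵥ v j) ∈
      affineProductSums m := by
  refine ⟨k + 1, fun i j => if i = k then v j else 0, ?_⟩
  ext x
  rw [affineProductSum, sum_range_succ, sum_eq_zero fun i hi => ?_]
  · simp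
  · exact prod_eq_zero (self_mem_range_succ i) (by simp [(mem_range.mp hi).ne])

theorem mul_mem_affineProductSums {p q : (Fin m → ℝ) → ℝ} (hp : p ∈ affineProductSums m)
    (hq : q ∈ affineProductSums m) : p * q ∈ affineProductSums m := by
  obtain ⟨N₁, u₁, rfl⟩ := hp
  obtain ⟨N₂, u₂, rfl⟩ := hq
  have hpq : affineProductSum N₁ u₁ * affineProductSum N₂ u₂ =
      ∑ i ∈ range N₁, ∑ i' ∈ range N₂, fun x =>
        ∏ j ∈ range (i + i' + 1 + 1), (Fin.snoc x 1 : Fin (m + 1) → ℝ) ⬝ᵥ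
          if j < i + 1 then u₁ i j else u₂ i' (j - (i + 1)) := by
    ext x
    simp only [affineProductSum, Pi.mul_apply, sum_mul_sum, Finset.sum_apply, apply_ite]
    refine sum_congr rfl fun i _ => sum_congr rfl fun i' _ => ?_
    rw [prod_range_mul_prod_range, show i + 1 + (i' + 1) = i + i' + 1 + 1 by omega]
  rw [hpq]
  exact sum_mem fun i _ => sum_mem fun i' _ => prod_mem_affineProductSums _ _

theorem const_mem_affineProductSums (r : ℝ) : (fun _ => r) ∈ affineProductSums m := by
  simpa [snoc_one_dotProduct_single_last] using
    prod_mem_affineProductSums (m := m) 0 fun _ => Pi.single (Fin.last m) r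

theorem apply_mem_affineProductSums (s : Fin m) : (fun x => x s) ∈ affineProductSums m := by
  simpa [snoc_one_dotProduct_single_castSucc] using
    prod_mem_affineProductSums (m := m) 0 fun _ => Pi.single s.castSucc 1

variable (m) in
def affineProductSumAlgebra : Subalgebra ℝ C(Fin m → ℝ, ℝ) where
  carrier := {p | ⇑p ∈ affineProductSums m}
  add_mem' {p q} hp hq := by
    rw [Set.mem_ofPred_eq, ContinuousMap.coe_add]
    exact add_mem hp hq
  mul_mem' {p q} hp hq := by
    rw [Set.mem_ofPred_eq, ContinuousMap.coe_mul]
    exact mul_mem_affineProductSums hp hq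
  algebraMap_mem' := const_mem_affineProductSums

theorem mem_affineProductSumAlgebra {p : C(Fin m → ℝ, ℝ)} :
    p ∈ affineProductSumAlgebra m ↔ ⇑p ∈ affineProductSums m := by
  rfl

variable (m) in
theorem affineProductSumAlgebra_separatesPoints :
    (affineProductSumAlgebra m).SeparatesPoints := by
  intro x y hxy
  obtain ⟨s, hs⟩ := Function.ne_iff.mp hxy
  exact ⟨_, ⟨ContinuousMap.eval s,
    mem_affineProductSumAlgebra.mpr (apply_mem_affineProductSums s), rfl⟩, hs⟩

end AffineProductSums

theorem approx_by_products_of_affine_forms_general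
    (m : ℕ) (C : Set (Fin m → ℝ)) (hC : IsCompact C)
    (f : (Fin m → ℝ) → ℝ) (hf : ContinuousOn f C)
    (ε : ℝ) (hε : 0 < ε) :
    ∃ (N : ℕ) (u : ℕ → ℕ → (Fin (m + 1) → ℝ)),
      ∀ x ∈ C,
        |f x - ∑ i ∈ Finset.range N, ∏ j ∈ Finset.range (i + 1),
            (∑ t : Fin (m + 1), (Fin.snoc x 1 : Fin (m + 1) → ℝ) t * u i j t)| < ε := by
  obtain ⟨p, ⟨N, u, hp⟩, hclose⟩ :=
    exists_mem_subalgebra_near_continuousOn_of_isCompact_of_separatesPoints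
      (affineProductSumAlgebra_separatesPoints m) hC hf hε
  refine ⟨N, u, fun x hx => ?_⟩
  have hpx := hclose x hx
  rw [← hp] at hpx
  exact hpx

/-- **Approximation of continuous functions on a compact set by sums of products of
affine linear forms.**

For `x : Fin m → ℝ`, write `x̌ = Fin.snoc x 1 : Fin (m+1) → ℝ` for the vector obtained by
appending the entry `1`, and `⟨y, u⟩ = ∑ t, y t * u t` for the standard Euclidean inner
product on `ℝ^(m+1)`.  Given a compact set `𝒞 ⊆ ℝ^m`, a function `f` continuous on `𝒞`,
and `ε > 0`, there are `N ∈ ℕ` and vectors `u i j ∈ ℝ^(m+1)` (for `i < N`, `j ≤ i`) such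
that `p x = ∑_{i<N} ∏_{j≤i} ⟨x̌, u i j⟩` satisfies `|f x − p x| < ε` on `𝒞`. -/
theorem approx_by_products_of_affine_forms
    (m : ℕ) (hm : 1 ≤ m) (C : Set (Fin m → ℝ)) (hC : IsCompact C)
    (f : (Fin m → ℝ) → ℝ) (hf : ContinuousOn f C)
    (ε : ℝ) (hε : 0 < ε) :
    ∃ (N : ℕ) (u : ℕ → ℕ → (Fin (m + 1) → ℝ)),
      ∀ x ∈ C,
        |f x - ∑ i ∈ Finset.range N, ∏ j ∈ Finset.range (i + 1),
            (∑ t : Fin (m + 1), (Fin.snoc x 1 : Fin (m + 1) → ℝ) t * u i j t)| < ε :=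
  approx_by_products_of_affine_forms_general m C hC f hf ε hε
end

section
/- Let m, k ≥ 1 and let p : ℝ^m → ℝ be a polynomial of total degree at most k. Then there exist real coefficients c_{i,d} and vectors v_{i,d} ∈ ℝ^m, for 0 ≤ i ≤ k and 1 ≤ d ≤ n_i with n_i = binomial(m + i − 1, i), such that p(x) = Σ_{i=0}^k Σ_{d=1}^{n_i} c_{i,d} ⟨x, v_{i,d}⟩^i for all x ∈ ℝ^m, where ⟨·,·⟩ is the standard Euclidean inner product on ℝ^m. -/
/-!
Split `p` into its homogeneous components. The `i`-th powers of linear forms span the space of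
homogeneous polynomials of degree `i`: a linear functional `φ` killing every `(∑ aⱼ Xⱼ) ^ i` kills
`∑_β multinomial(β) φ(X^β) a^β` for every `a`, so this polynomial in `a` vanishes and hence
`φ(X^β) = 0` for every monomial of degree `i`. That space has dimension `n_i`, the number of
monomials of degree `i`, so a basis extracted from the powers of linear forms has at most `n_i`
elements.
-/

open MvPolynomial Finset Submodule Module

section LinearAlgebra

variable {K V ι : Type*} [Field K] [AddCommGroup V] [Module K V]

theorem Submodule.mem_span_of_forall_dual_eq_zero {s : Set V} {x : V}
    (h : ∀ φ : Dual K V, (∀ y ∈ s, φ y = 0) → φ x = 0) : x ∈ span K s := by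
  by_contra hx
  obtain ⟨φ, hφx, hφs⟩ := exists_dual_map_eq_bot_of_notMem hx inferInstance
  exact hφx <| h φ fun y hy => (mem_bot K).1 <| hφs ▸ mem_map_of_mem (subset_span hy)

theorem Submodule.exists_fin_sum_smul_eq_of_mem_span_range {f : ι → V}
    [FiniteDimensional K (span K (Set.range f))] {x : V} (hx : x ∈ span K (Set.range f)) :
    ∃ (c : Fin (finrank K (span K (Set.range f))) → K)
      (a : Fin (finrank K (span K (Set.range f))) → ι), x = ∑ j, c j • f (a j) := by
  obtain ⟨κ, a, -, hspan, hli⟩ := exists_linearIndependent' K f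
  let b : Basis κ K (span K (Set.range f)) := (Basis.span hli).map (LinearEquiv.ofEq _ _ hspan)
  have := Module.Finite.finite_basis b
  have := Fintype.ofFinite κ
  let e : κ ≃ Fin _ := Fintype.equivFinOfCardEq (finrank_eq_card_basis b).symm
  refine ⟨fun j => b.repr ⟨x, hx⟩ (e.symm j), fun j => a (e.symm j), ?_⟩
  rw [e.symm.sum_comp (fun j => b.repr ⟨x, hx⟩ j • f (a j))]
  conv_lhs => rw [← Subtype.coe_mk x hx, ← b.sum_repr ⟨x, hx⟩]
  simp [b, Basis.span_apply]

theorem Submodule.exists_sum_range_smul_eq_of_mem_span_range [Nonempty ι] {f : ι → V}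
    [FiniteDimensional K (span K (Set.range f))] {n : ℕ}
    (hn : finrank K (span K (Set.range f)) ≤ n) {x : V} (hx : x ∈ span K (Set.range f)) :
    ∃ (c : ℕ → K) (a : ℕ → ι), x = ∑ d ∈ range n, c d • f (a d) := by
  obtain ⟨c, a, rfl⟩ := exists_fin_sum_smul_eq_of_mem_span_range hx
  refine ⟨fun d => if h : d < finrank K (span K (Set.range f)) then c ⟨d, h⟩ else 0,
    fun d => if h : d < finrank K (span K (Set.range f)) then a ⟨d, h⟩
      else Classical.arbitrary ι, ?_⟩
  rw [← sum_subset (range_subset_range.2 hn) fun d _ hd => by simp_all, sum_range]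
  simp

end LinearAlgebra

namespace MvPolynomial

theorem sum_homogeneousComponent_of_totalDegree_le {σ R : Type*} [CommSemiring R]
    {p : MvPolynomial σ R} {k : ℕ} (hk : p.totalDegree ≤ k) :
    ∑ i ∈ range (k + 1), homogeneousComponent i p = p := by
  rw [← sum_subset (range_subset_range.2 (Nat.succ_le_succ hk)) fun i _ hi =>
    homogeneousComponent_eq_zero i p (by simp at hi; omega), sum_homogeneousComponent]

variable {σ : Type*} [Fintype σ]

section FinsuppAntidiag

variable [DecidableEq σ]

theorem mem_finsuppAntidiag_univ {n : ℕ} {d : σ →₀ ℕ} :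
    d ∈ (univ : Finset σ).finsuppAntidiag n ↔ d.degree = n := by
  simp [Finsupp.degree_eq_sum]

theorem homogeneousSubmodule_eq_supported_finsuppAntidiag (R : Type*) [CommSemiring R] (n : ℕ) :
    homogeneousSubmodule σ R n =
      AddMonoidAlgebra.supported R R ((univ : Finset σ).finsuppAntidiag n : Set (σ →₀ ℕ)) := by
  rw [homogeneousSubmodule_eq_finsupp_supported]
  congr
  ext d
  simp [Finsupp.degree_eq_sum]

theorem IsHomogeneous.eq_sum_monomial_finsuppAntidiag {R : Type*} [CommSemiring R] {n : ℕ}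
    {p : MvPolynomial σ R} (hp : p.IsHomogeneous n) :
    p = ∑ d ∈ (univ : Finset σ).finsuppAntidiag n, monomial d (coeff d p) := by
  ext d
  rw [coeff_sum, sum_eq_single d (fun e _ he => by rw [coeff_monomial, if_neg he]) ?_,
    coeff_monomial, if_pos rfl]
  intro hd
  rw [coeff_monomial, if_pos rfl]
  by_contra h
  exact hd (mem_finsuppAntidiag_univ.2 (Finsupp.degree_eq_weight_one (R := ℕ) ▸ hp h))

end FinsuppAntidiag

theorem finrank_homogeneousSubmodule (R : Type*) [CommRing R] [Nontrivial R] (n : ℕ) :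
    finrank R (homogeneousSubmodule σ R n) = (Fintype.card σ + n - 1).choose n := by
  classical
  rw [homogeneousSubmodule_eq_supported_finsuppAntidiag,
    (AddMonoidAlgebra.supportedEquivFinsupp _).finrank_eq, finrank_finsupp_self]
  simp [card_finsuppAntidiag_nat_eq_choose]

variable {K : Type*} [Field K]

theorem isHomogeneous_linearForm_pow (a : σ → K) (n : ℕ) :
    ((∑ i, a i • X i : MvPolynomial σ K) ^ n).IsHomogeneous n := by
  simpa using (IsHomogeneous.sum _ _ 1 fun i _ =>
    Submodule.smul_mem (homogeneousSubmodule σ K 1) (a i) (isHomogeneous_X K i)).pow n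

theorem dual_apply_monomial_eq_zero_of_forall_linearForm_pow [CharZero K]
    (φ : Dual K (MvPolynomial σ K)) {n : ℕ} (hφ : ∀ a : σ → K, φ ((∑ i, a i • X i) ^ n) = 0)
    {d : σ →₀ ℕ} (hd : d.degree = n) : φ (monomial d 1) = 0 := by
  classical
  set A := (univ : Finset σ).finsuppAntidiag n
  set q : MvPolynomial σ K := ∑ e ∈ A, monomial e (e.multinomial * φ (monomial e 1))
  have hq : q = 0 := by
    refine MvPolynomial.funext fun a => ?_
    rw [map_zero, ← hφ a, (isHomogeneous_linearForm_pow a n).eq_sum_monomial_finsuppAntidiag]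
    simp only [q, map_sum, eval_monomial, Finsupp.prod_pow,
      coeff_linearCombination_X_pow_of_fintype]
    refine sum_congr rfl fun e he => ?_
    have he' : (e.sum fun _ m => m) = n := mem_finsuppAntidiag_univ.1 he
    have hmon (c : K) : φ (monomial e c) = c * φ (monomial e 1) := by
      rw [← smul_eq_mul, ← map_smul, smul_monomial, smul_eq_mul, mul_one]
    rw [if_pos he', hmon (_ * ∏ _, _)]
    ring
  have hdA : d ∈ A := mem_finsuppAntidiag_univ.2 hd
  have hcoeff := congrArg (coeff d) hq
  simp only [q, coeff_sum, coeff_monomial, sum_ite_eq', hdA, ↓reduceIte, coeff_zero, mul_eq_zero,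
    Nat.cast_eq_zero] at hcoeff
  exact hcoeff.resolve_left (by rw [Finsupp.multinomial_eq]; exact (Nat.multinomial_pos _ _).ne')

theorem span_range_linearForm_pow [CharZero K] (n : ℕ) :
    span K (Set.range fun a : σ → K => (∑ i, a i • X i) ^ n) = homogeneousSubmodule σ K n := by
  classical
  refine le_antisymm (span_le.2 ?_) ?_
  · rintro _ ⟨a, rfl⟩
    exact isHomogeneous_linearForm_pow a n
  · rw [homogeneousSubmodule_eq_supported_finsuppAntidiag,
      AddMonoidAlgebra.supported_eq_span_single, span_le]
    rintro _ ⟨d, hd, rfl⟩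
    refine mem_span_of_forall_dual_eq_zero fun φ hφ => ?_
    exact dual_apply_monomial_eq_zero_of_forall_linearForm_pow φ (fun a => hφ _ ⟨a, rfl⟩)
      (mem_finsuppAntidiag_univ.1 hd)

theorem IsHomogeneous.exists_eq_sum_smul_linearForm_pow [CharZero K] {n : ℕ}
    {p : MvPolynomial σ K} (hp : p.IsHomogeneous n) :
    ∃ (c : ℕ → K) (v : ℕ → σ → K),
      p = ∑ d ∈ range ((Fintype.card σ + n - 1).choose n), c d • (∑ i, v d i • X i) ^ n := by
  have hspan := span_range_linearForm_pow (σ := σ) (K := K) n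
  have : FiniteDimensional K
      (span K (Set.range fun a : σ → K => (∑ i, a i • X i : MvPolynomial σ K) ^ n)) := by
    rw [hspan]
    exact Module.Finite.iff_fg.2 (homogeneousSubmodule_fg σ K n)
  refine exists_sum_range_smul_eq_of_mem_span_range
    (f := fun a : σ → K => (∑ i, a i • X i : MvPolynomial σ K) ^ n) ?_ (by rwa [hspan])
  rw [hspan, finrank_homogeneousSubmodule]

end MvPolynomial

theorem polynomial_eq_sum_powers_of_linear_forms_general
    (m k : ℕ)
    (p : MvPolynomial (Fin m) ℝ) (hp : p.totalDegree ≤ k) :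
    ∃ (c : ℕ → ℕ → ℝ) (v : ℕ → ℕ → (Fin m → ℝ)),
      ∀ x : Fin m → ℝ,
        MvPolynomial.eval x p =
          ∑ i ∈ Finset.range (k + 1), ∑ d ∈ Finset.range ((m + i - 1).choose i),
            c i d * (∑ t : Fin m, x t * v i d t) ^ i := by
  choose c v hcv using fun i =>
    (homogeneousComponent_isHomogeneous i p).exists_eq_sum_smul_linearForm_pow
  refine ⟨c, v, fun x => ?_⟩
  conv_lhs => rw [← sum_homogeneousComponent_of_totalDegree_le hp]
  simp_rw [map_sum, hcv, Fintype.card_fin]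
  simp [mul_comm]

/-- **Realization of multivariate polynomials as linear combinations of powers of
linear forms** (Chui–Li).

Let `p` be a real polynomial in `m` variables of total degree at most `k`, and let
`n_i = (m + i - 1).choose i` be the number of monomials of total degree exactly `i` in
`m` variables.  Then there are coefficients `c i d ∈ ℝ` and vectors `v i d ∈ ℝ^m`
(for `0 ≤ i ≤ k`, `d < n_i`) such that
`p x = ∑_{i=0}^{k} ∑_{d < n_i} c i d * ⟨x, v i d⟩ ^ i` for all `x`, where
`⟨x, v⟩ = ∑ t, x t * v t` is the standard Euclidean inner product on `ℝ^m`. -/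
theorem polynomial_eq_sum_powers_of_linear_forms
    (m k : ℕ) (hm : 1 ≤ m) (hk : 1 ≤ k)
    (p : MvPolynomial (Fin m) ℝ) (hp : p.totalDegree ≤ k) :
    ∃ (c : ℕ → ℕ → ℝ) (v : ℕ → ℕ → (Fin m → ℝ)),
      ∀ x : Fin m → ℝ,
        MvPolynomial.eval x p =
          ∑ i ∈ Finset.range (k + 1), ∑ d ∈ Finset.range ((m + i - 1).choose i),
            c i d * (∑ t : Fin m, x t * v i d t) ^ i :=
  polynomial_eq_sum_powers_of_linear_forms_general m k p hp
end

section
/- Let ψ : ℝ^m → ℂ admit a separated finite-sum representation ψ(x_1,…,x_m) = Σ_{n=1}^L ∏_{i=1}^m f_{i,n}(x_i) for functions f_{i,n} : ℝ → ℂ. Then for Hermitian N×N matrices A_1,…,A_m with fixed spectral decompositions (with eigenvalues λ_{i,1},…,λ_{i,N}) and N×N matrices X_1,…,X_{m−1}, the operator norm of the multiple operator integral satisfies ‖T^{A_1,…,A_m}_ψ(X_1,…,X_{m−1})‖ ≤ (Σ_{n=1}^L ∏_{i=1}^m max_{1≤j≤N} |f_{i,n}(λ_{i,j})|) · ∏_{i=1}^{m−1}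 ‖X_i‖, where ‖·‖ denotes the operator norm on N×N complex matrices induced by the Euclidean norm on ℂ^N. -/
open Matrix

/-- A fixed spectral decomposition of a Hermitian `N × N` complex matrix: real
eigenvalues `lam j` and an orthonormal family of eigenvectors `u j` (an orthonormal
family of `N` vectors in `ℂ^N`, hence an orthonormal basis). -/
structure SpectralDecomp (N : ℕ) where
  /-- the eigenvalues -/
  lam : Fin N → ℝ
  /-- the orthonormal eigenbasis -/
  u : Fin N → (Fin N → ℂ)
  /-- orthonormality of the eigenbasis -/
  orthonormal : ∀ j k : Fin N, star (u j) ⬝ᵥ u k = if j = k then 1 else 0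

namespace SpectralDecomp

variable {N : ℕ}

/-- The rank-one spectral projection `P j = u j (u j)^*`. -/
noncomputable def P (S : SpectralDecomp N) (j : Fin N) : Matrix (Fin N) (Fin N) ℂ :=
  vecMulVec (S.u j) (star (S.u j))

/-- The Hermitian matrix `A = ∑ j, lam j • P j` with the given spectral decomposition. -/
noncomputable def A (S : SpectralDecomp N) : Matrix (Fin N) (Fin N) ℂ :=
  ∑ j : Fin N, (S.lam j : ℂ) • S.P j

end SpectralDecomp

/-- The finite-dimensional **multiple operator integral**
`T^{A_0,…,A_{m-1}}_ψ(X_0,…,X_{m-2}) = ∑_{j_0,…,j_{m-1}} ψ(λ_{0,j_0},…,λ_{m-1,j_{m-1}})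
P_{0,j_0} X_0 P_{1,j_1} X_1 ⋯ X_{m-2} P_{m-1,j_{m-1}}`, for spectral decompositions
`S 0, …, S (m-1)` of the Hermitian matrices `A_0, …, A_{m-1}`, a function `ψ` of `m` real
variables, and matrices `X 0, …, X (m-2)`. -/
noncomputable def MOI {N : ℕ} (m : ℕ) (ψ : (Fin m → ℝ) → ℂ)
    (S : ℕ → SpectralDecomp N) (X : ℕ → Matrix (Fin N) (Fin N) ℂ) :
    Matrix (Fin N) (Fin N) ℂ :=
  ∑ j : Fin m → Fin N,
    ψ (fun i => (S i.val).lam (j i)) •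
      (List.ofFn fun i : Fin m =>
        (if (i : ℕ) = 0 then 1 else X ((i : ℕ) - 1)) * (S i.val).P (j i)).prod

/-!
Both sides are additive in the separated sum, so it suffices to treat one product symbol
`ψ x = ∏ i, g i (x i)`. For it the sum over multi-indices factorises, by (noncommutative)
distributivity, into the ordered product `g₀(A₀) X₀ g₁(A₁) ⋯ X_{m-2} g_{m-1}(A_{m-1})`. Each
`g(A) = ∑ j, g(λ_j) P_j = U diag(g(λ)) U^*` with `U` unitary, so `‖g(A)‖ = max_j |g(λ_j)|`, and
submultiplicativity of the operator norm concludes.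
-/

theorem List.sum_prod_ofFn_eq_prod_ofFn_sum {R κ : Type*} [NonAssocSemiring R] [Fintype κ] :
    ∀ (m : ℕ) (M : Fin m → κ → R),
      ∑ j : Fin m → κ, (List.ofFn fun i => M i (j i)).prod =
        (List.ofFn fun i => ∑ k, M i k).prod
  | 0, M => by simp
  | m + 1, M => by
    rw [← (Fin.consEquiv fun _ => κ).sum_comp, Fintype.sum_prod_type, List.ofFn_succ,
      List.prod_cons, ← sum_prod_ofFn_eq_prod_ofFn_sum m (fun i => M i.succ), Finset.sum_mul]
    simp [Fin.consEquiv, List.ofFn_succ, Finset.mul_sum]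

theorem List.prod_ofFn_smul {K R : Type*} [CommMonoid K] [Monoid R] [MulAction K R]
    [IsScalarTower K R R] [SMulCommClass K R R] :
    ∀ (m : ℕ) (c : Fin m → K) (g : Fin m → R),
      (List.ofFn fun i => c i • g i).prod = (∏ i, c i) • (List.ofFn g).prod
  | 0, c, g => by simp
  | m + 1, c, g => by
    rw [List.ofFn_succ, List.prod_cons, List.ofFn_succ, List.prod_cons,
      prod_ofFn_smul m (fun i => c i.succ) (fun i => g i.succ), smul_mul_smul_comm,
      Fin.prod_univ_succ]

theorem Fin.prod_univ_ite_zero_pred {M : Type*} [CommMonoid M] (m : ℕ) (h : ℕ → M) :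
    ∏ i : Fin m, (if (i : ℕ) = 0 then 1 else h (i - 1)) = ∏ i ∈ Finset.range (m - 1), h i := by
  cases m with
  | zero => simp
  | succ m => simp [Fin.prod_univ_succ, Finset.prod_range]

theorem pi_norm_le_sup' {ι E : Type*} [Fintype ι] [SeminormedAddCommGroup E] (f : ι → E)
    (h : (Finset.univ : Finset ι).Nonempty) : ‖f‖ ≤ Finset.univ.sup' h (‖f ·‖) :=
  have hle j : ‖f j‖ ≤ Finset.univ.sup' h (‖f ·‖) := Finset.le_sup' (‖f ·‖) (Finset.mem_univ j)
  (pi_norm_le_iff_of_nonneg ((norm_nonneg _).trans (hle h.choose))).2 hle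

open scoped Matrix.Norms.L2Operator

namespace SpectralDecomp

variable {N : ℕ} (S : SpectralDecomp N)

/-- The matrix `g(A)` for `A = S.A`. -/
noncomputable def funCalc (g : ℝ → ℂ) : Matrix (Fin N) (Fin N) ℂ :=
  ∑ j, g (S.lam j) • S.P j

def eigenvectorMatrix : Matrix (Fin N) (Fin N) ℂ :=
  of fun a j => S.u j a

theorem eigenvectorMatrix_mem_unitaryGroup :
    S.eigenvectorMatrix ∈ unitaryGroup (Fin N) ℂ := by
  rw [mem_unitaryGroup_iff']
  ext j k
  simpa [eigenvectorMatrix, mul_apply, one_apply, dotProduct] using S.orthonormal j k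

theorem sum_smul_P_eq (c : Fin N → ℂ) :
    ∑ j, c j • S.P j = S.eigenvectorMatrix * diagonal c * star S.eigenvectorMatrix := by
  ext a b
  simp [P, eigenvectorMatrix, Matrix.sum_apply, mul_apply, vecMulVec_apply, diagonal_apply,
    mul_assoc, mul_left_comm]

theorem norm_sum_smul_P (c : Fin N → ℂ) : ‖∑ j, c j • S.P j‖ = ‖c‖ := by
  have hU := S.eigenvectorMatrix_mem_unitaryGroup
  rw [sum_smul_P_eq, mul_assoc, CStarRing.norm_mem_unitary_mul _ hU,
    CStarRing.norm_mul_mem_unitary _ (Unitary.star_mem hU), l2_opNorm_diagonal]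

theorem norm_funCalc (g : ℝ → ℂ) : ‖S.funCalc g‖ = ‖fun j => g (S.lam j)‖ :=
  S.norm_sum_smul_P _

end SpectralDecomp

section MOI

variable {N m : ℕ} (S : ℕ → SpectralDecomp N) (X : ℕ → Matrix (Fin N) (Fin N) ℂ)

theorem MOI_finset_sum {ι : Type*} (s : Finset ι) (ψ : ι → (Fin m → ℝ) → ℂ) :
    MOI m (fun x => ∑ n ∈ s, ψ n x) S X = ∑ n ∈ s, MOI m (ψ n) S X := by
  simp only [MOI, Finset.sum_smul]
  rw [Finset.sum_comm]

theorem MOI_prod (g : Fin m → ℝ → ℂ) :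
    MOI m (fun x => ∏ i, g i (x i)) S X =
      (List.ofFn fun i : Fin m =>
        (if (i : ℕ) = 0 then 1 else X ((i : ℕ) - 1)) * (S i).funCalc (g i)).prod := by
  simp only [MOI, ← List.prod_ofFn_smul, SpectralDecomp.funCalc, Finset.mul_sum, mul_smul_comm]
  exact List.sum_prod_ofFn_eq_prod_ofFn_sum m fun i k =>
    g i ((S i).lam k) • ((if (i : ℕ) = 0 then 1 else X (i - 1)) * (S i).P k)

theorem norm_MOI_prod_le [Nonempty (Fin N)] (g : Fin m → ℝ → ℂ) :
    ‖MOI m (fun x => ∏ i, g i (x i)) S X‖ ≤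
      (∏ i : Fin m, ‖fun j => g i ((S i).lam j)‖) * ∏ i ∈ Finset.range (m - 1), ‖X i‖ := by
  rw [MOI_prod, ← Fin.prod_univ_ite_zero_pred m fun i => ‖X i‖,
    ← norm_one (α := Matrix (Fin N) (Fin N) ℂ), mul_comm, ← Finset.prod_mul_distrib]
  refine (List.norm_prod_le _).trans ?_
  rw [List.map_ofFn, Function.comp_def, List.prod_ofFn]
  gcongr with i
  refine (norm_mul_le _ _).trans_eq ?_
  rw [SpectralDecomp.norm_funCalc]
  split_ifs <;> rfl

end MOI

theorem MOI_norm_le_general {N : ℕ} (hN : 0 < N) (m L : ℕ)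
    (f : ℕ → ℕ → ℝ → ℂ) (ψ : (Fin m → ℝ) → ℂ)
    (hψ : ∀ x : Fin m → ℝ,
      ψ x = ∑ n ∈ Finset.range L, ∏ i : Fin m, f i.val n (x i))
    (S : ℕ → SpectralDecomp N) (X : ℕ → Matrix (Fin N) (Fin N) ℂ) :
    ‖MOI m ψ S X‖ ≤
      (∑ n ∈ Finset.range L, ∏ i ∈ Finset.range m,
          Finset.univ.sup' ⟨(⟨0, hN⟩ : Fin N), Finset.mem_univ _⟩
            (fun j : Fin N => ‖f i n ((S i).lam j)‖)) *
        ∏ i ∈ Finset.range (m - 1), ‖X i‖ := by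
  have : Nonempty (Fin N) := ⟨⟨0, hN⟩⟩
  rw [funext hψ, MOI_finset_sum, Finset.sum_mul]
  refine (norm_sum_le _ _).trans (Finset.sum_le_sum fun n _ => ?_)
  refine (norm_MOI_prod_le S X fun i : Fin m => f i n).trans ?_
  rw [Finset.prod_range (n := m)]
  gcongr with i
  exact pi_norm_le_sup' _ _

/-- **Norm estimate for a multiple operator integral with separated symbol.**

If `ψ(x_0,…,x_{m-1}) = ∑_{n<L} ∏_{i<m} f i n (x_i)`, then the operator norm (induced by
the Euclidean norm on `ℂ^N`) of the MOI satisfies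
`‖T^{A_0,…,A_{m-1}}_ψ(X_0,…,X_{m-2})‖
  ≤ (∑_{n<L} ∏_{i<m} max_{j<N} ‖f i n (λ_{i,j})‖) · ∏_{i<m-1} ‖X i‖`. -/
theorem MOI_norm_le {N : ℕ} (hN : 0 < N) (m L : ℕ) (hm : 1 ≤ m)
    (f : ℕ → ℕ → ℝ → ℂ) (ψ : (Fin m → ℝ) → ℂ)
    (hψ : ∀ x : Fin m → ℝ,
      ψ x = ∑ n ∈ Finset.range L, ∏ i : Fin m, f i.val n (x i))
    (S : ℕ → SpectralDecomp N) (X : ℕ → Matrix (Fin N) (Fin N) ℂ) :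
    ‖MOI m ψ S X‖ ≤
      (∑ n ∈ Finset.range L, ∏ i ∈ Finset.range m,
          Finset.univ.sup' ⟨(⟨0, hN⟩ : Fin N), Finset.mem_univ _⟩
            (fun j : Fin N => ‖f i n ((S i).lam j)‖)) *
        ∏ i ∈ Finset.range (m - 1), ‖X i‖ :=
  MOI_norm_le_general hN m L f ψ hψ S X
end

section
/- Fix m ≥ 1 and a position 1 ≤ j ≤ m + 1. Let A_1,…,A_m, C, D be Hermitian N×N complex matrices with fixed spectral decompositions, let X_1,…,X_m be N×N complex matrices, and let ψ₀ : ℝ^{m+1} → ℂ and ψ₁ : ℝ^{m+2} → ℂ be functions satisfying the divided-difference relation: for all y_1,…,y_{m+2} ∈ ℝ, (y_j − y_{j+1}) · ψ₁(y_1,…,y_{m+2}) = ψ₀(y_1,…,y_{j−1}, y_j, y_{j+2},…,y_{m+2}) − ψ₀(y_1,…,y_{j−1}, y_{j+1}, y_{j+2},…,y_{m+2}). Then the multiple operator integrals satisfy the perturbation formula T^{A_1,…,A_{j−1},C,A_j,…,A_m}_{ψ₀}(X_1,…,X_m) − T^{A_1,…,A_{j−1},D,A_j,…,A_m}_{ψ₀}(X_1,…,X_m)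 = T^{A_1,…,A_{j−1},C,D,A_j,…,A_m}_{ψ₁}(X_1,…,X_{j−1}, C − D, X_j,…,X_m). -/
open Matrix

/-- Remove the entry at index `q` from a tuple of `m + 1` reals, giving a tuple of `m`
reals. -/
def removeAt {m : ℕ} (q : ℕ) (y : Fin (m + 1) → ℝ) : Fin m → ℝ :=
  fun i => if (i : ℕ) < q then y i.castSucc else y i.succ

/-!
Between the eigenprojections `P_{C,a}` and `P_{D,b}` the difference `C - D` acts as the scalar
`λ_a - μ_b`, the difference of the corresponding eigenvalues. Hence the right-hand side is the
multiple operator integral of `(y_p - y_{p+1}) ψ₁ = ψ₀(y without y_{p+1}) - ψ₀(y without y_p)`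
with `C - D` replaced by the identity. In each of the two resulting terms one summation index
no longer enters the symbol; summing its projections gives `1`, which collapses the term to an
integral with one matrix fewer.
-/

namespace List

theorem prod_ofFn_eq_update_removeNth {M : Type*} [Monoid M] {n : ℕ} (g : Fin (n + 1) → M)
    (q : Fin n) :
    (ofFn g).prod =
      (ofFn (Function.update (Fin.removeNth q.succ g) q (g q.castSucc * g q.succ))).prod := by
  induction n with
  | zero => exact q.elim0
  | succ n ih =>
    cases q using Fin.cases with
    | zero => simp [ofFn_succ, mul_assoc, Fin.removeNth_apply]
    | succ q =>
      rw [ofFn_succ, prod_cons, ih (fun i => g i.succ) q, ofFn_succ, prod_cons]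
      congr 2
      ext i
      simp [Function.update_apply, Fin.removeNth_apply]

theorem prod_ofFn_eq_update {M : Type*} [Monoid M] {n : ℕ} (g : Fin (n + 1) → M)
    (f : Fin n → M) (q : Fin n) (hf : ∀ i ≠ q, g (q.succ.succAbove i) = f i) :
    (ofFn g).prod = (ofFn (Function.update f q (g q.castSucc * g q.succ))).prod := by
  rw [prod_ofFn_eq_update_removeNth g q]
  congr 2
  ext i
  rcases eq_or_ne i q with rfl | hi
  · simp
  · simp [Function.update_of_ne hi, Fin.removeNth_apply, hf i hi]

variable {A : Type*} [Semiring A] {n : ℕ}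

theorem prod_ofFn_update_smul {R : Type*} [CommSemiring R] [Algebra R A] (f : Fin n → A)
    (q : Fin n) (c : R) (x : A) :
    (ofFn (Function.update f q (c • x))).prod = c • (ofFn (Function.update f q x)).prod := by
  simp only [← MultilinearMap.mkPiAlgebraFin_apply (R := R), MultilinearMap.map_update_smul]

theorem sum_prod_ofFn_update {ι : Type*} [Fintype ι] (f : Fin n → A) (q : Fin n) (x : ι → A) :
    ∑ b, (ofFn (Function.update f q (x b))).prod =
      (ofFn (Function.update f q (∑ b, x b))).prod := by
  simp only [← MultilinearMap.mkPiAlgebraFin_apply (R := ℕ), MultilinearMap.map_update_sum]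

end List

theorem Fin.succ_succAbove_of_ne {n : ℕ} {q i : Fin n} (h : i ≠ q) :
    q.succ.succAbove i = q.castSucc.succAbove i := by
  rcases h.lt_or_gt with h | h
  · rw [Fin.succAbove_succ_of_le _ _ h.le, Fin.succAbove_castSucc_of_lt _ _ h]
  · rw [Fin.succAbove_succ_of_lt _ _ h, Fin.succAbove_castSucc_of_le _ _ h.le]

theorem removeAt_eq_removeNth {n : ℕ} (q : Fin (n + 1)) (y : Fin (n + 1) → ℝ) :
    removeAt q y = Fin.removeNth q y := by
  ext i
  simp only [removeAt, Fin.removeNth_apply, Fin.succAbove, Fin.lt_def, Fin.val_castSucc]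
  exact (apply_ite y _ _ _).symm

section Insertion

variable {α : Type*}

def insertAt (q : ℕ) (c : α) (f : ℕ → α) : ℕ → α :=
  fun i => if i < q then f i else if i = q then c else f (i - 1)

theorem insertAt_self (q : ℕ) (c : α) (f : ℕ → α) : insertAt q c f q = c := by
  simp [insertAt]

theorem insertAt_of_lt {q i : ℕ} (h : i < q) (c : α) (f : ℕ → α) : insertAt q c f i = f i := by
  simp [insertAt, h]

theorem insertAt_of_gt {q i : ℕ} (h : q < i) (c : α) (f : ℕ → α) :
    insertAt q c f i = f (i - 1) := by
  simp [insertAt, h.ne', h.not_gt]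

theorem insertAt_succAbove {n : ℕ} (q : Fin (n + 1)) (c : α) (f : ℕ → α) (i : Fin n) :
    insertAt q c f (q.succAbove i) = f i := by
  simp only [insertAt, Fin.succAbove, Fin.lt_def, Fin.val_castSucc]
  split_ifs <;> simp_all <;> omega

theorem insertAt_succ_insertAt (q : ℕ) (a b : α) (f : ℕ → α) :
    insertAt (q + 1) b (insertAt q a f) = insertAt q a (insertAt q b f) := by
  ext i
  simp only [insertAt]
  split_ifs <;> first | rfl | omega

theorem update_insertAt (q : ℕ) (c d : α) (f : ℕ → α) :
    Function.update (insertAt q c f) q d = insertAt q d f := by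
  ext i
  rcases eq_or_ne i q with rfl | hi
  · simp [insertAt_self]
  · simp [insertAt, hi]

def leftMul {M : Type*} [One M] (X : ℕ → M) (i : ℕ) : M := if i = 0 then 1 else X (i - 1)

theorem leftMul_insertAt {M : Type*} [One M] (q : ℕ) (c : M) (X : ℕ → M) :
    leftMul (insertAt q c X) = insertAt (q + 1) c (leftMul X) := by
  ext i
  simp only [leftMul, insertAt]
  split_ifs <;> first | rfl | omega

@[simp]
theorem leftMul_succ {M : Type*} [One M] (X : ℕ → M) (i : ℕ) : leftMul X (i + 1) = X i := rfl

theorem leftMul_update {M : Type*} [One M] (q : ℕ) (d : M) (X : ℕ → M) :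
    leftMul (Function.update X q d) = Function.update (leftMul X) (q + 1) d := by
  ext i
  simp only [leftMul, Function.update_apply]
  split_ifs <;> first | rfl | omega

end Insertion

namespace SpectralDecomp

variable {N : ℕ} (S : SpectralDecomp N)

theorem P_mul_P (j k : Fin N) : S.P j * S.P k = if j = k then S.P j else 0 := by
  rw [P, P, vecMulVec_mul_vecMulVec, S.orthonormal]
  split_ifs with h
  · rw [h, one_smul]
  · rw [zero_smul, vecMulVec_zero]

theorem sum_P : ∑ j, S.P j = 1 := by
  let U : Matrix (Fin N) (Fin N) ℂ := Matrix.of fun a k => S.u k a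
  have hU : Uᴴ * U = 1 := by
    ext j k
    simpa [U, Matrix.mul_apply, dotProduct, Matrix.one_apply] using S.orthonormal j k
  have hU' : U * Uᴴ = 1 := mul_eq_one_comm.mp hU
  ext a b
  simpa [U, Matrix.mul_apply, Matrix.sum_apply, P, vecMulVec_apply] using
    congrFun (congrFun hU' a) b

theorem P_mul_A (j : Fin N) : S.P j * S.A = (S.lam j : ℂ) • S.P j := by
  simp [A, Finset.mul_sum, P_mul_P]

theorem A_mul_P (j : Fin N) : S.A * S.P j = (S.lam j : ℂ) • S.P j := by
  simp [A, Finset.sum_mul, P_mul_P]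

theorem P_mul_sub_mul_P (S T : SpectralDecomp N) (a b : Fin N) :
    S.P a * ((S.A - T.A) * T.P b) = ((S.lam a - T.lam b : ℝ) : ℂ) • (S.P a * T.P b) := by
  rw [sub_mul, mul_sub, ← mul_assoc, S.P_mul_A, T.A_mul_P, smul_mul_assoc, mul_smul_comm,
    ← sub_smul, Complex.ofReal_sub]

end SpectralDecomp

section MOI

variable {N : ℕ}

noncomputable def moiFactors {n : ℕ} (S : ℕ → SpectralDecomp N)
    (X : ℕ → Matrix (Fin N) (Fin N) ℂ) (j : Fin n → Fin N) (i : Fin n) : Matrix (Fin N) (Fin N) ℂ :=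
  leftMul X i * (S i).P (j i)

theorem MOI_eq_sum {n : ℕ} (ψ : (Fin n → ℝ) → ℂ) (S : ℕ → SpectralDecomp N)
    (X : ℕ → Matrix (Fin N) (Fin N) ℂ) :
    MOI n ψ S X = ∑ j, ψ (fun i => (S i).lam (j i)) • (List.ofFn (moiFactors S X j)).prod :=
  rfl

theorem MOI_sub {n : ℕ} (ψ φ : (Fin n → ℝ) → ℂ) (S : ℕ → SpectralDecomp N)
    (X : ℕ → Matrix (Fin N) (Fin N) ℂ) :
    MOI n ψ S X - MOI n φ S X = MOI n (fun y => ψ y - φ y) S X := by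
  simp only [MOI_eq_sum, ← Finset.sum_sub_distrib, sub_smul]

theorem MOI_of_eq_A_sub_A {n : ℕ} (ψ : (Fin (n + 1) → ℝ) → ℂ) (S : ℕ → SpectralDecomp N)
    (X : ℕ → Matrix (Fin N) (Fin N) ℂ) (q : Fin n) (hX : X q = (S q).A - (S (q + 1)).A) :
    MOI (n + 1) ψ S X =
      MOI (n + 1) (fun y => ((y q.castSucc - y q.succ : ℝ) : ℂ) * ψ y) S
        (Function.update X q 1) := by
  simp only [MOI_eq_sum, mul_smul]
  refine Finset.sum_congr rfl fun j _ => ?_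
  set F := moiFactors S (Function.update X q 1) j
  have hoff : ∀ i ≠ q, moiFactors S X j (q.succ.succAbove i) = Fin.removeNth q.succ F i := by
    intro i _
    have hne : ((q.succ.succAbove i : Fin (n + 1)) : ℕ) ≠ q + 1 :=
      Fin.val_ne_of_ne (Fin.succAbove_ne q.succ i)
    simp only [Fin.removeNth_apply, F, moiFactors, leftMul_update, Function.update_of_ne hne]
  have hmid : moiFactors S X j q.castSucc * moiFactors S X j q.succ =
      (((S q).lam (j q.castSucc) - (S (q + 1)).lam (j q.succ) : ℝ) : ℂ) •
        (F q.castSucc * F q.succ) := by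
    simp only [moiFactors, F, leftMul_update, Fin.val_castSucc, Fin.val_succ, leftMul_succ,
      Function.update_self, Function.update_of_ne (Nat.succ_ne_self _).symm, hX, one_mul]
    rw [mul_assoc, SpectralDecomp.P_mul_sub_mul_P, mul_smul_comm, mul_assoc]
  rw [List.prod_ofFn_eq_update _ _ q hoff, hmid, List.prod_ofFn_update_smul,
    ← List.prod_ofFn_eq_update _ _ q fun i _ => (Fin.removeNth_apply _ _ _).symm, smul_comm]
  rfl

theorem MOI_comp_removeNth {n : ℕ} (r : Fin (n + 1)) (ψ : (Fin n → ℝ) → ℂ)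
    (T : SpectralDecomp N) (S : ℕ → SpectralDecomp N) (Y : ℕ → Matrix (Fin N) (Fin N) ℂ) :
    MOI (n + 1) (fun y => ψ (Fin.removeNth r y)) (insertAt r T S) Y =
      ∑ j : Fin n → Fin N, ψ (fun i => (S i).lam (j i)) •
        ∑ b, (List.ofFn (moiFactors (insertAt r T S) Y (Fin.insertNth r b j))).prod := by
  rw [MOI_eq_sum, ← (Fin.insertNthEquiv (fun _ => Fin N) r).sum_comp, Fintype.sum_prod_type,
    Finset.sum_comm]
  refine Finset.sum_congr rfl fun j _ => ?_
  rw [Finset.smul_sum]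
  refine Finset.sum_congr rfl fun b _ => ?_
  simp only [Fin.insertNthEquiv, Equiv.coe_fn_mk]
  congr 2
  ext i
  rw [Fin.removeNth_apply, insertAt_succAbove, Fin.insertNth_apply_succAbove]

theorem MOI_insertAt_succ_comp_removeNth {n : ℕ} (q : Fin n) (ψ : (Fin n → ℝ) → ℂ)
    (T : SpectralDecomp N) (S : ℕ → SpectralDecomp N) (X : ℕ → Matrix (Fin N) (Fin N) ℂ) :
    MOI (n + 1) (fun y => ψ (Fin.removeNth q.succ y)) (insertAt (q + 1) T S) (insertAt q 1 X) =
      MOI n ψ S X := by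
  rw [← Fin.val_succ, MOI_comp_removeNth, MOI_eq_sum]
  refine Finset.sum_congr rfl fun j _ => congrArg _ ?_
  set F := moiFactors S X j
  have hoff : ∀ b i, moiFactors (insertAt q.succ T S) (insertAt q 1 X)
      (Fin.insertNth q.succ b j) (q.succ.succAbove i) = F i := by
    intro b i
    simp only [moiFactors, F, leftMul_insertAt, ← Fin.val_succ, insertAt_succAbove,
      Fin.insertNth_apply_succAbove]
  have hmid : ∀ b, moiFactors (insertAt q.succ T S) (insertAt q 1 X)
      (Fin.insertNth q.succ b j) q.succ = T.P b := by
    intro b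
    simp only [moiFactors, leftMul_insertAt, ← Fin.val_succ, insertAt_self,
      Fin.insertNth_apply_same, one_mul]
  rw [Finset.sum_congr rfl fun b _ => List.prod_ofFn_eq_update _ F q fun i _ => hoff b i]
  simp only [← Fin.succAbove_succ_self, hoff, hmid, List.sum_prod_ofFn_update, ← Finset.mul_sum,
    T.sum_P, mul_one, Function.update_eq_self]

theorem MOI_insertAt_comp_removeNth {n : ℕ} (q : Fin n) (ψ : (Fin n → ℝ) → ℂ)
    (T : SpectralDecomp N) (S : ℕ → SpectralDecomp N) (X : ℕ → Matrix (Fin N) (Fin N) ℂ) :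
    MOI (n + 1) (fun y => ψ (Fin.removeNth q.castSucc y)) (insertAt q T S) (insertAt q 1 X) =
      MOI n ψ S X := by
  rw [← Fin.val_castSucc, MOI_comp_removeNth, MOI_eq_sum]
  refine Finset.sum_congr rfl fun j _ => congrArg _ ?_
  set F := moiFactors S X j
  have hoff : ∀ b, ∀ i ≠ q, moiFactors (insertAt q.castSucc T S) (insertAt q.castSucc 1 X)
      (Fin.insertNth q.castSucc b j) (q.succ.succAbove i) = F i := by
    intro b i hi
    simp only [moiFactors, F]
    rw [Fin.succ_succAbove_of_ne hi, insertAt_succAbove, Fin.insertNth_apply_succAbove,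
      leftMul_insertAt, Fin.val_castSucc, ← Fin.val_succ, ← Fin.succ_succAbove_of_ne hi,
      insertAt_succAbove]
  have hmid : ∀ b, moiFactors (insertAt q.castSucc T S) (insertAt q.castSucc 1 X)
      (Fin.insertNth q.castSucc b j) q.castSucc *
      moiFactors (insertAt q.castSucc T S) (insertAt q.castSucc 1 X)
      (Fin.insertNth q.castSucc b j) q.succ = leftMul X q * T.P b * (S q).P (j q) := by
    intro b
    have hj : Fin.insertNth (α := fun _ => Fin N) q.castSucc b j q.succ = j q := by
      rw [← Fin.succAbove_castSucc_self, Fin.insertNth_apply_succAbove]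
    simp only [moiFactors, hj, leftMul_insertAt, Fin.val_castSucc, Fin.val_succ,
      insertAt_self, insertAt_of_lt (Nat.lt_add_one _), insertAt_of_gt (Nat.lt_add_one _),
      Nat.add_sub_cancel, Fin.insertNth_apply_same, one_mul]
  rw [Finset.sum_congr rfl fun b _ => List.prod_ofFn_eq_update _ F q (hoff b)]
  simp only [hmid, List.sum_prod_ofFn_update, ← Finset.sum_mul, ← Finset.mul_sum, T.sum_P,
    mul_one]
  change (List.ofFn (Function.update F q (F q))).prod = _
  rw [Function.update_eq_self]

end MOI

/-- **Perturbation formula for multiple operator integrals.**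

Let `ψ₁` be a first-order divided difference of `ψ₀` in the variable at (0-based)
position `p ≤ m`, i.e. `(y_p − y_{p+1}) ψ₁(y) = ψ₀(y \ y_{p+1}) − ψ₀(y \ y_p)` for all
`y ∈ ℝ^{m+2}`.  Then for Hermitian matrices `A_0,…,A_{m-1}, C, D` with fixed spectral
decompositions `S 0,…,S (m-1), SC, SD` and matrices `X 0,…,X (m-1)`,
`T^{A_0,…,A_{p-1},C,A_p,…,A_{m-1}}_{ψ₀}(X_0,…,X_{m-1})
 − T^{A_0,…,A_{p-1},D,A_p,…,A_{m-1}}_{ψ₀}(X_0,…,X_{m-1})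
 = T^{A_0,…,A_{p-1},C,D,A_p,…,A_{m-1}}_{ψ₁}(X_0,…,X_{p-1}, C − D, X_p,…,X_{m-1})`. -/
theorem MOI_perturbation {N : ℕ} (m : ℕ) (p : ℕ) (hp : p ≤ m)
    (S : ℕ → SpectralDecomp N) (SC SD : SpectralDecomp N)
    (X : ℕ → Matrix (Fin N) (Fin N) ℂ)
    (ψ₀ : (Fin (m + 1) → ℝ) → ℂ) (ψ₁ : (Fin (m + 2) → ℝ) → ℂ)
    (hdd : ∀ y : Fin (m + 2) → ℝ,
      ((y ⟨p, by omega⟩ - y ⟨p + 1, by omega⟩ : ℝ) : ℂ) * ψ₁ y =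
        ψ₀ (removeAt (p + 1) y) - ψ₀ (removeAt p y)) :
    MOI (m + 1) ψ₀
        (fun i => if i < p then S i else if i = p then SC else S (i - 1)) X -
      MOI (m + 1) ψ₀
        (fun i => if i < p then S i else if i = p then SD else S (i - 1)) X =
      MOI (m + 2) ψ₁
        (fun i => if i < p then S i else if i = p then SC
          else if i = p + 1 then SD else S (i - 2))
        (fun i => if i < p then X i else if i = p then SC.A - SD.A else X (i - 1)) := by
  set q : Fin (m + 1) := ⟨p, by omega⟩
  have hS : (fun i => if i < p then S i else if i = p then SC
      else if i = p + 1 then SD else S (i - 2)) = insertAt (q + 1) SD (insertAt q SC S) := by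
    ext i
    simp only [insertAt, q]
    split_ifs <;> first | rfl | omega
  have hCD : insertAt q (SC.A - SD.A) X q = (insertAt (q + 1) SD (insertAt q SC S) q).A -
      (insertAt (q + 1) SD (insertAt q SC S) (q + 1)).A := by
    rw [insertAt_self, insertAt_self, insertAt_of_lt (Nat.lt_add_one _), insertAt_self]
  have hψ : ∀ y, ψ₀ (Fin.removeNth q.succ y) - ψ₀ (Fin.removeNth q.castSucc y) =
      ((y q.castSucc - y q.succ : ℝ) : ℂ) * ψ₁ y := fun y => by
    rw [← removeAt_eq_removeNth, ← removeAt_eq_removeNth]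
    exact (hdd y).symm
  rw [hS, show (fun i => if i < p then X i else if i = p then SC.A - SD.A else X (i - 1)) =
      insertAt q (SC.A - SD.A) X from rfl, MOI_of_eq_A_sub_A _ _ _ q hCD, update_insertAt,
    ← funext hψ, ← MOI_sub, MOI_insertAt_succ_comp_removeNth, insertAt_succ_insertAt,
    MOI_insertAt_comp_removeNth]
  rfl
end

section
/- Let A and B be N×N complex matrices (or elements of any normed algebra over ℝ), and let n ≥ 1 and 1 ≤ k ≤ n. Then the k-th derivative at t = 0 of the function t ↦ (A + tB)^n exists and equals k! · Σ_{(a_0,…,a_k)} A^{a_0} B A^{a_1} B ⋯ B A^{a_k}, where the sum runs over all tuples (a_0,…,a_k) of nonnegative integers with a_0 + a_1 + ⋯ + a_k = n − k. -/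
/-!
Expanding `(A + tB)ⁿ` word by word, the coefficient of `tᵐ` is the sum of all words with `m`
letters `B` and `n - m` letters `A`; this follows by induction on `n` from the fact that a word
of length `n + 1` either starts with `A` or starts with `B`. So `t ↦ (A + tB)ⁿ` is a polynomial
with coefficients in the algebra, and its `k`-th derivative at `0` is `k!` times its `k`-th
coefficient.
-/

open Finset

theorem Finset.Nat.sum_antidiagonalTuple_succ {M : Type*} [AddCommMonoid M] (k n : ℕ)
    (f : (Fin (k + 1) → ℕ) → M) :
    ∑ a ∈ Nat.antidiagonalTuple (k + 1) n, f a =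
      ∑ p ∈ antidiagonal n, ∑ b ∈ Nat.antidiagonalTuple k p.2, f (Fin.cons p.1 b) := by
  rw [sum_sigma']
  refine (sum_nbij' (fun x => Fin.cons x.1.1 x.2)
    (fun (a : Fin (k + 1) → ℕ) =>
      (⟨(a 0, ∑ i : Fin k, a i.succ), Fin.tail a⟩ : Σ _ : ℕ × ℕ, Fin k → ℕ))
    ?_ ?_ ?_ ?_ ?_).symm <;>
  simp +contextual [Nat.mem_antidiagonalTuple, Fin.sum_univ_succ, Fin.tail]

section WordSum

variable {R : Type*} [Semiring R] (A B : R)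

/-- The sum of all words in `A` and `B` with `m` letters `B` and `N` letters `A`, each written as
`A ^ a₀ * B * A ^ a₁ * ⋯ * B * A ^ aₘ`; `wordSumB` is the same sum restricted to words that begin
with `B` (for `m = 0`, just the empty word). -/
def wordSum (m N : ℕ) : R :=
  ∑ a ∈ Finset.Nat.antidiagonalTuple (m + 1) N,
    (List.ofFn fun i : Fin (m + 1) => (if (i : ℕ) = 0 then 1 else B) * A ^ a i).prod

def wordSumB (m N : ℕ) : R :=
  ∑ b ∈ Finset.Nat.antidiagonalTuple m N, (List.ofFn fun i : Fin m => B * A ^ b i).prod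

theorem wordSum_eq_sum_antidiagonal (m N : ℕ) :
    wordSum A B m N = ∑ p ∈ antidiagonal N, A ^ p.1 * wordSumB A B m p.2 := by
  simp [wordSum, wordSumB, Finset.Nat.sum_antidiagonalTuple_succ, List.ofFn_succ, mul_sum]

theorem wordSumB_succ (m N : ℕ) : wordSumB A B (m + 1) N = B * wordSum A B m N := by
  simp [wordSumB, wordSum_eq_sum_antidiagonal, Finset.Nat.sum_antidiagonalTuple_succ,
    List.ofFn_succ, mul_sum, mul_assoc]

theorem wordSumB_zero_succ (N : ℕ) : wordSumB A B 0 (N + 1) = 0 := by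
  simp [wordSumB]

theorem wordSum_zero_right (m : ℕ) : wordSum A B m 0 = wordSumB A B m 0 := by
  simp [wordSum_eq_sum_antidiagonal]

theorem wordSum_succ (m N : ℕ) :
    wordSum A B m (N + 1) = wordSumB A B m (N + 1) + A * wordSum A B m N := by
  simp [wordSum_eq_sum_antidiagonal, Finset.Nat.sum_antidiagonal_succ, mul_sum, pow_succ',
    mul_assoc]

variable {S : Type*} [CommSemiring S] [Algebra S R] (t : S)

theorem sum_antidiagonal_smul_wordSumB_succ (n : ℕ) :
    ∑ p ∈ antidiagonal (n + 1), t ^ p.1 • wordSumB A B p.1 p.2 =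
      t • B * ∑ p ∈ antidiagonal n, t ^ p.1 • wordSum A B p.1 p.2 := by
  simp [Finset.Nat.sum_antidiagonal_succ, wordSumB_zero_succ, wordSumB_succ, mul_sum, pow_succ,
    smul_smul]

theorem add_smul_pow_eq_sum_wordSum (n : ℕ) :
    (A + t • B) ^ n = ∑ p ∈ antidiagonal n, t ^ p.1 • wordSum A B p.1 p.2 := by
  induction n with
  | zero => simp [wordSum]
  | succ n ih =>
    rw [Finset.Nat.sum_antidiagonal_succ', wordSum_zero_right]
    simp only [wordSum_succ, smul_add, sum_add_distrib]
    rw [pow_succ', add_mul, ih, ← sum_antidiagonal_smul_wordSumB_succ,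
      Finset.Nat.sum_antidiagonal_succ', mul_sum]
    simp only [mul_smul_comm]
    abel

end WordSum

theorem iteratedDeriv_pow_smul_zero {𝕜 F : Type*} [NontriviallyNormedField 𝕜]
    [NormedAddCommGroup F] [NormedSpace 𝕜 F] (v : F) (k m : ℕ) :
    iteratedDeriv k (fun t : 𝕜 => t ^ m • v) 0 = if k = m then k.factorial • v else 0 := by
  rw [iteratedDeriv_smul_const (by fun_prop), iteratedDeriv_fun_pow_zero]
  split_ifs with h
  · rw [h, Nat.cast_smul_eq_nsmul]
  · rw [Nat.cast_zero, zero_smul]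

theorem iteratedDeriv_sum_pow_smul_zero {𝕜 F : Type*} [NontriviallyNormedField 𝕜]
    [NormedAddCommGroup F] [NormedSpace 𝕜 F] (s : Finset ℕ) (c : ℕ → F) (k : ℕ) :
    iteratedDeriv k (fun t : 𝕜 => ∑ m ∈ s, t ^ m • c m) 0 =
      if k ∈ s then k.factorial • c k else 0 := by
  rw [iteratedDeriv_fun_sum fun m _ => by fun_prop]
  simp_rw [iteratedDeriv_pow_smul_zero]
  exact sum_ite_eq s k _

theorem iteratedDeriv_pow_add_smul_general {𝒜 : Type*} [NormedRing 𝒜] [NormedAlgebra ℝ 𝒜]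
    (A B : 𝒜) (n k : ℕ) (hkn : k ≤ n) :
    ContDiff ℝ k (fun t : ℝ => (A + t • B) ^ n) ∧
      iteratedDeriv k (fun t : ℝ => (A + t • B) ^ n) 0 =
        k.factorial •
          ∑ a ∈ Finset.Nat.antidiagonalTuple (k + 1) (n - k),
            (List.ofFn fun i : Fin (k + 1) =>
              (if (i : ℕ) = 0 then 1 else B) * A ^ a i).prod := by
  have hexpand : (fun t : ℝ => (A + t • B) ^ n) =
      fun t : ℝ => ∑ m ∈ range (n + 1), t ^ m • wordSum A B m (n - m) := by
    funext t
    rw [add_smul_pow_eq_sum_wordSum, Finset.Nat.sum_antidiagonal_eq_sum_range_succ_mk]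
  refine ⟨by fun_prop, ?_⟩
  rw [hexpand, iteratedDeriv_sum_pow_smul_zero, if_pos (mem_range.2 (Nat.lt_succ_of_le hkn))]
  rfl

/-- **The `k`-th derivative at `t = 0` of `t ↦ (A + tB)^n`.**

For elements `A, B` of a normed algebra over `ℝ` (e.g. the `N × N` complex matrices)
and `1 ≤ k ≤ n`, the function `t ↦ (A + tB)^n` is `k` times differentiable and its
`k`-th derivative at `t = 0` equals
`k! · ∑_{a_0 + ⋯ + a_k = n - k} A^{a_0} B A^{a_1} B ⋯ B A^{a_k}`,
the sum running over all `(k+1)`-tuples of nonnegative integers with sum `n - k`. -/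
theorem iteratedDeriv_pow_add_smul {𝒜 : Type*} [NormedRing 𝒜] [NormedAlgebra ℝ 𝒜]
    (A B : 𝒜) (n k : ℕ) (hn : 1 ≤ n) (hk : 1 ≤ k) (hkn : k ≤ n) :
    ContDiff ℝ k (fun t : ℝ => (A + t • B) ^ n) ∧
      iteratedDeriv k (fun t : ℝ => (A + t • B) ^ n) 0 =
        k.factorial •
          ∑ a ∈ Finset.Nat.antidiagonalTuple (k + 1) (n - k),
            (List.ofFn fun i : Fin (k + 1) =>
              (if (i : ℕ) = 0 then 1 else B) * A ^ a i).prod :=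
  iteratedDeriv_pow_add_smul_general A B n k hkn
end
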